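/- For the rotation T by irrational α and the interval B_k around 0 of total length η_k + η_{k+1} (as defined from the convergents), the Lebesgue measure of the set {x : τ_{B_k}(x) ≤ s} equals 1 if s ≥ q_{k+1}, equals q_k η_{k+1} + η_k ⌊s⌋ if q_k ≤ s < q_{k+1}, and equals (η_k + η_{k+1}) ⌊s⌋ if 0 ≤ s < q_k. -/

import Mathlib

/-!
Work on the circle `ℝ/ℤ`. There `B_k` is the arc `(-η_{k+1}, η_k)` (for odd `k` its mirror
image) punctured at `0`, and `{τ ≤ N}` is the union of the translates `B_k - mα`, `1 ≤ m ≤ N`.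
Split `B_k = I ∪ J` with `|I| = η_k`, `|J| = η_{k+1}`. Since `q_k α ≡ ±η_k`, the translate of
`J` by `q_k α` lies in `I`, so `J - mα ⊆ I - (m + q_k)α` whenever `m + q_k ≤ N`. By the best
approximation property `‖dα‖ ≥ η_k + η_{k+1}` for `0 < |d| < q_{k+1}`, `|d| ≠ q_k`, the `N`
translates of `I` and the remaining `min N q_k` translates of `J` are pairwise disjoint, so
`{τ ≤ N}` has measure `N η_k + min N q_k η_{k+1}`; for `N = q_{k+1}` this is
`q_{k+1} η_k + q_k η_{k+1} = 1`.
-/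

open MeasureTheory Filter Set Topology

/-- Iterates of the Gauss map starting at `α`; `cfTail α k` has continued
fraction expansion `[c_{k+1}, c_{k+2}, ...]` when `α = [c_1, c_2, ...]`. -/
noncomputable def cfTail (α : ℝ) : ℕ → ℝ
  | 0 => α
  | n + 1 => Int.fract (1 / cfTail α n)

/-- `cfC α k` is the partial quotient `c_{k+1}` of the continued fraction of `α`. -/
noncomputable def cfC (α : ℝ) (k : ℕ) : ℤ := ⌊1 / cfTail α k⌋

/-- Numerators of the convergents: `p 0 = 0`, `p 1 = 1`, `p k = c_k p_{k-1} + p_{k-2}`. -/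
noncomputable def cfP (α : ℝ) : ℕ → ℤ
  | 0 => 0
  | 1 => 1
  | k + 2 => cfC α (k + 1) * cfP α (k + 1) + cfP α k

/-- Denominators of the convergents: `q 0 = 1`, `q 1 = c_1`, `q k = c_k q_{k-1} + q_{k-2}`. -/
noncomputable def cfQ (α : ℝ) : ℕ → ℤ
  | 0 => 1
  | 1 => cfC α 0
  | k + 2 => cfC α (k + 1) * cfQ α (k + 1) + cfQ α k

/-- `η_k = |q_k α - p_k|`. -/
noncomputable def cfEta (α : ℝ) (k : ℕ) : ℝ := |(cfQ α k : ℝ) * α - (cfP α k : ℝ)|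

/-- Rotation by `α` on `[0,1)`. -/
noncomputable def rot (α : ℝ) (x : ℝ) : ℝ := Int.fract (x + α)

/-- The interval `(-η_{k+1}, η_k)` mod 1 for `k` even, `(-η_k, η_{k+1})` mod 1 for `k` odd,
viewed as a subset of `[0,1)`. -/
noncomputable def Bset (α : ℝ) (k : ℕ) : Set ℝ :=
  if Even k then Set.Ioo 0 (cfEta α k) ∪ Set.Ioo (1 - cfEta α (k + 1)) 1
  else Set.Ioo 0 (cfEta α (k + 1)) ∪ Set.Ioo (1 - cfEta α k) 1

/-- First entry time `τ_B(x) = min {j ≥ 1 : T^j x ∈ B}`, with value `∞` if `x` never enters. -/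
noncomputable def entryTime (T : ℝ → ℝ) (B : Set ℝ) (x : ℝ) : ℕ∞ :=
  sInf ((fun n : ℕ => (n : ℕ∞)) '' {n : ℕ | 1 ≤ n ∧ T^[n] x ∈ B})

/-- The observable `X(x) = q_{m+1}` where `m = min {ℓ : x ∉ B_ℓ}`. -/
noncomputable def Xobs (α : ℝ) (x : ℝ) : ℝ :=
  ((cfQ α (sInf {ℓ : ℕ | x ∉ Bset α ℓ} + 1) : ℤ) : ℝ)

/-- `M_n = max_{1 ≤ j ≤ n} X ∘ T^j`. -/
noncomputable def Mmax (α : ℝ) (n : ℕ) (x : ℝ) : ℝ :=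
  ⨆ j : Finset.Icc 1 n, Xobs α ((rot α)^[(j : ℕ)] x)

/-- Level set `L(y) = {x : X(x) > y}`. -/
noncomputable def Lset (α : ℝ) (y : ℝ) : Set ℝ := {x | Xobs α x > y}

/-- Lebesgue measure on `[0,1)`. -/
noncomputable def μrot : Measure ℝ := volume.restrict (Set.Ico (0 : ℝ) 1)

theorem cfTail_mem_Ioo_and_irrational {α : ℝ} (hirr : Irrational α) (hα : α ∈ Ioo 0 1)
    (k : ℕ) : cfTail α k ∈ Ioo 0 1 ∧ Irrational (cfTail α k) := by
  induction k with
  | zero => exact ⟨hα, hirr⟩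
  | succ n ih =>
    have hirr' : Irrational (cfTail α (n + 1)) :=
      (one_div (cfTail α n) ▸ ih.2.inv).sub_intCast _
    exact ⟨⟨(Int.fract_nonneg _).lt_of_ne' hirr'.ne_zero, Int.fract_lt_one _⟩, hirr'⟩

theorem cfTail_mul_cfC_add_cfTail_succ {α : ℝ} (k : ℕ) (h : cfTail α k ≠ 0) :
    cfTail α k * (cfC α k + cfTail α (k + 1)) = 1 := by
  rw [cfC, cfTail, Int.floor_add_fract, mul_one_div_cancel h]

theorem one_le_cfC {α : ℝ} (hirr : Irrational α) (hα : α ∈ Ioo 0 1) (k : ℕ) :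
    1 ≤ cfC α k := by
  obtain ⟨h0, h1⟩ := (cfTail_mem_Ioo_and_irrational hirr hα k).1
  exact Int.le_floor.2 (by rw [Int.cast_one, le_div_iff₀ h0]; linarith)

theorem cfQ_mul_sub_cfP_eq_prod {α : ℝ} (hirr : Irrational α) (hα : α ∈ Ioo 0 1) :
    ∀ k, (cfQ α k : ℝ) * α - cfP α k = (-1) ^ k * ∏ j ∈ Finset.range (k + 1), cfTail α j
  | 0 => by simp [cfQ, cfP, cfTail]
  | 1 => by
    have h := cfTail_mul_cfC_add_cfTail_succ 0 (cfTail_mem_Ioo_and_irrational hirr hα 0).1.1.ne'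
    simp only [cfQ, cfP, cfTail, Finset.prod_range_succ, Finset.prod_range_zero] at h ⊢
    push_cast
    linear_combination h
  | k + 2 => by
    have h := cfTail_mul_cfC_add_cfTail_succ (k + 1)
      (cfTail_mem_Ioo_and_irrational hirr hα (k + 1)).1.1.ne'
    have h₀ := cfQ_mul_sub_cfP_eq_prod hirr hα k
    have h₁ := cfQ_mul_sub_cfP_eq_prod hirr hα (k + 1)
    simp only [cfQ, cfP, Int.cast_add, Int.cast_mul, Finset.prod_range_succ _ (k + 2),
      Finset.prod_range_succ _ (k + 1)] at h₁ ⊢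
    linear_combination (cfC α (k + 1) : ℝ) * h₁ + h₀
      - (-1) ^ k * (∏ j ∈ Finset.range (k + 1), cfTail α j) * h

theorem cfEta_eq_prod {α : ℝ} (hirr : Irrational α) (hα : α ∈ Ioo 0 1) (k : ℕ) :
    cfEta α k = ∏ j ∈ Finset.range (k + 1), cfTail α j := by
  rw [cfEta, cfQ_mul_sub_cfP_eq_prod hirr hα, abs_mul, abs_pow, abs_neg, abs_one, one_pow,
    one_mul, abs_of_pos (Finset.prod_pos fun j _ => (cfTail_mem_Ioo_and_irrational hirr hα j).1.1)]

theorem cfQ_mul_sub_cfP {α : ℝ} (hirr : Irrational α) (hα : α ∈ Ioo 0 1) (k : ℕ) :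
    (cfQ α k : ℝ) * α - cfP α k = (-1) ^ k * cfEta α k := by
  rw [cfEta_eq_prod hirr hα, cfQ_mul_sub_cfP_eq_prod hirr hα]

theorem cfEta_pos {α : ℝ} (hirr : Irrational α) (hα : α ∈ Ioo 0 1) (k : ℕ) :
    0 < cfEta α k := by
  rw [cfEta_eq_prod hirr hα]
  exact Finset.prod_pos fun j _ => (cfTail_mem_Ioo_and_irrational hirr hα j).1.1

theorem cfEta_succ_lt {α : ℝ} (hirr : Irrational α) (hα : α ∈ Ioo 0 1) (k : ℕ) :
    cfEta α (k + 1) < cfEta α k := by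
  rw [cfEta_eq_prod hirr hα (k + 1), Finset.prod_range_succ, ← cfEta_eq_prod hirr hα]
  exact mul_lt_of_lt_one_right (cfEta_pos hirr hα k)
    (cfTail_mem_Ioo_and_irrational hirr hα (k + 1)).1.2

theorem one_le_cfQ {α : ℝ} (hirr : Irrational α) (hα : α ∈ Ioo 0 1) : ∀ k, 1 ≤ cfQ α k
  | 0 => le_rfl
  | 1 => one_le_cfC hirr hα 0
  | k + 2 => by
    have := one_le_cfQ hirr hα k
    have := one_le_cfQ hirr hα (k + 1)
    have := one_le_cfC hirr hα (k + 1)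
    simp only [cfQ]
    nlinarith

theorem cfQ_le_cfQ_succ {α : ℝ} (hirr : Irrational α) (hα : α ∈ Ioo 0 1) :
    ∀ k, cfQ α k ≤ cfQ α (k + 1)
  | 0 => one_le_cfC hirr hα 0
  | k + 1 => by
    have := one_le_cfQ hirr hα k
    have := one_le_cfQ hirr hα (k + 1)
    have := one_le_cfC hirr hα (k + 1)
    simp only [cfQ]
    nlinarith

theorem cfQ_mul_cfP_succ_sub (α : ℝ) :
    ∀ k, cfQ α k * cfP α (k + 1) - cfQ α (k + 1) * cfP α k = (-1) ^ k
  | 0 => by simp [cfQ, cfP]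
  | k + 1 => by
    simp only [cfQ, cfP]
    linear_combination (-1 : ℤ) * cfQ_mul_cfP_succ_sub α k

theorem cfQ_succ_mul_cfEta_add {α : ℝ} (hirr : Irrational α) (hα : α ∈ Ioo 0 1) (k : ℕ) :
    (cfQ α (k + 1) : ℝ) * cfEta α k + cfQ α k * cfEta α (k + 1) = 1 := by
  have h₀ := cfQ_mul_sub_cfP hirr hα k
  have h₁ := cfQ_mul_sub_cfP hirr hα (k + 1)
  have hdet : ((cfQ α k * cfP α (k + 1) - cfQ α (k + 1) * cfP α k : ℤ) : ℝ) = (-1) ^ k := by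
    rw [cfQ_mul_cfP_succ_sub]; push_cast; ring
  push_cast at hdet
  have hsq : ((-1 : ℝ) ^ k) ^ 2 = 1 := by rw [pow_right_comm, neg_one_sq, one_pow]
  linear_combination (-1 : ℝ) ^ k * ((cfQ α k : ℝ) * h₁ - cfQ α (k + 1) * h₀ + hdet)
    - ((cfQ α (k + 1) : ℝ) * cfEta α k + cfQ α k * cfEta α (k + 1) - 1) * hsq

theorem cfEta_add_cfEta_succ_le_one {α : ℝ} (hirr : Irrational α) (hα : α ∈ Ioo 0 1) (k : ℕ) :
    cfEta α k + cfEta α (k + 1) ≤ 1 := by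
  have hq : (1 : ℝ) ≤ cfQ α k := by exact_mod_cast one_le_cfQ hirr hα k
  have hQ : (1 : ℝ) ≤ cfQ α (k + 1) := by exact_mod_cast one_le_cfQ hirr hα (k + 1)
  nlinarith [cfQ_succ_mul_cfEta_add hirr hα k, cfEta_pos hirr hα k, cfEta_pos hirr hα (k + 1)]

theorem two_mul_cfEta_add_cfEta_succ_le_one {α : ℝ} (hirr : Irrational α) (hα : α ∈ Ioo 0 1)
    {k : ℕ} (hqQ : cfQ α k < cfQ α (k + 1)) : 2 * cfEta α k + cfEta α (k + 1) ≤ 1 := by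
  have hq : (1 : ℝ) ≤ cfQ α k := by exact_mod_cast one_le_cfQ hirr hα k
  have hQ : (cfQ α k : ℝ) + 1 ≤ cfQ α (k + 1) := by exact_mod_cast hqQ
  nlinarith [cfQ_succ_mul_cfEta_add hirr hα k, cfEta_pos hirr hα k, cfEta_pos hirr hα (k + 1)]

theorem exists_eq_cfQ_combination (α : ℝ) (k : ℕ) (d r : ℤ) :
    ∃ a b : ℤ, d = a * cfQ α k + b * cfQ α (k + 1) ∧ r = a * cfP α k + b * cfP α (k + 1) := by
  have hdet := cfQ_mul_cfP_succ_sub α k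
  have hsq : ((-1 : ℤ) ^ k) ^ 2 = 1 := by rw [pow_right_comm, neg_one_sq, one_pow]
  refine ⟨(-1) ^ k * (d * cfP α (k + 1) - r * cfQ α (k + 1)),
    (-1) ^ k * (r * cfQ α k - d * cfP α k), ?_, ?_⟩
  · linear_combination (-(-1 : ℤ) ^ k * d) * hdet - d * hsq
  · linear_combination (-(-1 : ℤ) ^ k * r) * hdet - r * hsq

theorem add_le_abs_mul_sub_mul {x y a b : ℤ} {u v : ℝ} (hx : 0 < x) (hv : 0 ≤ v) (hvu : v ≤ u)
    (h0 : a * x + b * y ≠ 0) (hy : |a * x + b * y| < y) (hx' : |a * x + b * y| ≠ x) :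
    u + v ≤ |a * u - b * v| := by
  wlog ha : 0 ≤ a generalizing a b
  · have := this (a := -a) (b := -b) (by grind) (by grind) (by grind) (by omega)
    rwa [← abs_neg, show -((a : ℝ) * u - b * v) = ((-a : ℤ) : ℝ) * u - ((-b : ℤ) : ℝ) * v by
      push_cast; ring]
  obtain ⟨hy₁, hy₂⟩ := abs_lt.1 hy
  rcases ha.eq_or_lt with rfl | ha
  · obtain hb | rfl | hb := lt_trichotomy b 0 <;> [nlinarith; simp at h0; nlinarith]
  obtain hb | rfl | hb := lt_trichotomy b 0
  · have : (1 : ℝ) ≤ a := by exact_mod_cast ha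
    have : (b : ℝ) ≤ -1 := by exact_mod_cast (show b ≤ -1 by omega)
    rw [abs_of_nonneg (by nlinarith)]
    nlinarith
  · have ha2 : (2 : ℝ) ≤ a := by
      have : a ≠ 1 := by rintro rfl; simp [abs_of_pos hx] at hx'
      exact_mod_cast (show 2 ≤ a by omega)
    rw [Int.cast_zero, zero_mul, sub_zero, abs_of_nonneg (by nlinarith)]
    nlinarith
  · nlinarith

namespace UnitAddCircle

theorem coe_intCast (n : ℤ) : ((n : ℝ) : UnitAddCircle) = 0 :=
  (AddCircle.coe_eq_zero_iff 1).2 ⟨n, zsmul_one _⟩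

theorem norm_coe_le_abs (x : ℝ) : ‖(x : UnitAddCircle)‖ ≤ |x| := by
  simpa [norm_eq] using round_le x 0

theorem le_norm_coe_of_mem_Icc {x δ : ℝ} (hx : x ∈ Icc δ (1 - δ)) :
    δ ≤ ‖(x : UnitAddCircle)‖ := by
  rw [norm_eq]
  rcases le_or_gt (round x) 0 with h | h
  · have : (round x : ℝ) ≤ 0 := by exact_mod_cast h
    exact le_abs.2 (Or.inl (by linarith [hx.1]))
  · have : (1 : ℝ) ≤ round x := by exact_mod_cast h
    exact le_abs.2 (Or.inr (by linarith [hx.2]))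

theorem coe_image_Ioo (a b : ℝ) : ((↑) : ℝ → UnitAddCircle) '' Ioo a b
    = Metric.ball (((a + b) / 2 : ℝ) : UnitAddCircle) ((b - a) / 2) := by
  ext z
  obtain ⟨y, rfl⟩ := QuotientAddGroup.mk_surjective z
  simp only [mem_image, Metric.mem_ball, dist_eq_norm, ← AddCircle.coe_sub]
  constructor
  · rintro ⟨x, ⟨hax, hxb⟩, hxy⟩
    rw [AddCircle.coe_sub, ← hxy, ← AddCircle.coe_sub]
    calc ‖((x - (a + b) / 2 : ℝ) : UnitAddCircle)‖ ≤ |x - (a + b) / 2| := norm_coe_le_abs _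
      _ < (b - a) / 2 := abs_sub_lt_iff.2 ⟨by linarith, by linarith⟩
  · intro h
    rw [norm_eq, abs_sub_lt_iff] at h
    refine ⟨y - round (y - (a + b) / 2), ⟨by linarith, by linarith⟩, ?_⟩
    rw [AddCircle.coe_sub, coe_intCast, sub_zero]

theorem volume_ball (c : ℝ) {r : ℝ} (hr : r ≤ 1 / 2) :
    volume (Metric.ball (c : UnitAddCircle) r) = ENNReal.ofReal (2 * r) := by
  have hball := coe_image_Ioo (c - r) (c + r)
  rw [show (c - r + (c + r)) / 2 = c by ring, show (c + r - (c - r)) / 2 = r by ring] at hball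
  have hfund : ((↑) : ℝ → UnitAddCircle) ⁻¹' Metric.ball (c : UnitAddCircle) r
      ∩ Ioc (c - r) (c - r + 1) = Ioo (c - r) (c + r) := by
    rw [← hball]
    ext x
    refine ⟨fun ⟨⟨y, hy, hyx⟩, hx⟩ => ?_,
      fun hx => ⟨mem_image_of_mem _ hx, hx.1, by linarith [hx.2]⟩⟩
    rwa [← (AddCircle.coe_eq_coe_iff_of_mem_Ioc ⟨hy.1, by linarith [hy.2]⟩ hx).1 hyx]
  rw [AddCircle.add_projection_respects_measure 1 (c - r) Metric.isOpen_ball.measurableSet,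
    hfund, Real.volume_Ioo]
  ring_nf

end UnitAddCircle

theorem cfQ_zsmul_coe {α : ℝ} (hirr : Irrational α) (hα : α ∈ Ioo 0 1) (k : ℕ) :
    cfQ α k • (α : UnitAddCircle) = (((-1) ^ k * cfEta α k : ℝ) : UnitAddCircle) := by
  rw [← AddCircle.coe_zsmul, zsmul_eq_mul, ← cfQ_mul_sub_cfP hirr hα, AddCircle.coe_sub,
    UnitAddCircle.coe_intCast, sub_zero]

-- Writing `(d, r) = a (q_k, p_k) + b (q_{k+1}, p_{k+1})` gives `dα - r = ±(a η_k - b η_{k+1})`.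
theorem cfEta_add_le_norm_zsmul {α : ℝ} (hirr : Irrational α) (hα : α ∈ Ioo 0 1) (k : ℕ)
    {d : ℤ} (hd : d ≠ 0) (hdQ : |d| < cfQ α (k + 1)) (hdq : |d| ≠ cfQ α k) :
    cfEta α k + cfEta α (k + 1) ≤ ‖d • (α : UnitAddCircle)‖ := by
  obtain ⟨a, b, hda, hr⟩ := exists_eq_cfQ_combination α k d (round (d * α))
  have hval : (d : ℝ) * α - round (d * α)
      = (-1) ^ k * (a * cfEta α k - b * cfEta α (k + 1)) := by
    rw [hr, hda]
    push_cast
    linear_combination (a : ℝ) * cfQ_mul_sub_cfP hirr hα k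
      + (b : ℝ) * cfQ_mul_sub_cfP hirr hα (k + 1)
  rw [← AddCircle.coe_zsmul, zsmul_eq_mul, UnitAddCircle.norm_eq, hval, abs_mul, abs_pow,
    abs_neg, abs_one, one_pow, one_mul]
  exact add_le_abs_mul_sub_mul (one_le_cfQ hirr hα k) (cfEta_pos hirr hα (k + 1)).le
    (cfEta_succ_lt hirr hα k).le (hda ▸ hd) (hda ▸ hdQ) (hda ▸ hdq)

theorem μrot_preimage_coe {A : Set UnitAddCircle} (hA : MeasurableSet A) :
    μrot (((↑) : ℝ → UnitAddCircle) ⁻¹' A) = volume A := by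
  rw [μrot, Measure.restrict_congr_set Ico_ae_eq_Ioc]
  simpa using (AddCircle.measurePreserving_mk 1 0).measure_preimage hA.nullMeasurableSet

theorem coe_rot_iterate (α x : ℝ) (m : ℕ) :
    (((rot α)^[m] x : ℝ) : UnitAddCircle) = x + m • (α : UnitAddCircle) := by
  induction m with
  | zero => simp
  | succ m ih =>
    rw [Function.iterate_succ_apply', rot, AddCircle.coe_fract, AddCircle.coe_add, ih,
      succ_nsmul, add_assoc]

theorem rot_iterate_mem_iff {α : ℝ} {S : Set ℝ} (hS : S ⊆ Ico 0 1) {m : ℕ} (hm : m ≠ 0)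
    (x : ℝ) : (rot α)^[m] x ∈ S
      ↔ (x : UnitAddCircle) + m • (α : UnitAddCircle) ∈ ((↑) : ℝ → UnitAddCircle) '' S := by
  obtain ⟨n, rfl⟩ := Nat.exists_eq_succ_of_ne_zero hm
  have hinj : InjOn ((↑) : ℝ → UnitAddCircle) (Ico 0 1) := fun y hy z hz h =>
    (AddCircle.coe_eq_coe_iff_of_mem_Ico (a := 0) (by rwa [zero_add]) (by rwa [zero_add])).1 h
  rw [← coe_rot_iterate, hinj.mem_image_iff hS]
  rw [Function.iterate_succ_apply', rot]
  exact ⟨Int.fract_nonneg _, Int.fract_lt_one _⟩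

theorem μrot_setOf_rot_iterate_mem {α : ℝ} {S : Set ℝ} (hS : S ⊆ Ico 0 1) (hSo : IsOpen S)
    (N : ℕ) : μrot {x | ∃ m, 1 ≤ m ∧ m ≤ N ∧ (rot α)^[m] x ∈ S}
      = volume (⋃ m ∈ Finset.Icc 1 N,
          (· + m • (α : UnitAddCircle)) ⁻¹' (((↑) : ℝ → UnitAddCircle) '' S)) := by
  have hset : {x | ∃ m, 1 ≤ m ∧ m ≤ N ∧ (rot α)^[m] x ∈ S} = ((↑) : ℝ → UnitAddCircle) ⁻¹'
      ⋃ m ∈ Finset.Icc 1 N, (· + m • (α : UnitAddCircle)) ⁻¹' (((↑) : ℝ → UnitAddCircle) '' S) := by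
    ext x
    simp only [mem_ofPred_eq, mem_preimage, mem_iUnion, Finset.mem_Icc, exists_prop, and_assoc]
    exact exists_congr fun m => and_congr_right fun hm =>
      and_congr_right fun _ => rot_iterate_mem_iff hS (by omega) x
  rw [hset, μrot_preimage_coe (Finset.measurableSet_biUnion _ fun m _ =>
    measurable_add_const _ (QuotientAddGroup.isOpenMap_coe _ hSo).measurableSet)]

theorem entryTime_le_iff (T : ℝ → ℝ) (B : Set ℝ) (x : ℝ) (n : ℕ) :
    entryTime T B x ≤ n ↔ ∃ m, 1 ≤ m ∧ m ≤ n ∧ T^[m] x ∈ B := by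
  rw [entryTime, ← ENat.lt_add_one_iff (ENat.natCast_ne_top n), sInf_lt_iff]
  simp only [mem_image, mem_ofPred_eq]
  constructor
  · rintro ⟨_, ⟨m, ⟨hm, hmB⟩, rfl⟩, hlt⟩
    exact ⟨m, hm, by exact_mod_cast (ENat.lt_add_one_iff (ENat.natCast_ne_top n)).1 hlt, hmB⟩
  · rintro ⟨m, hm, hmn, hmB⟩
    exact ⟨m, ⟨m, ⟨hm, hmB⟩, rfl⟩,
      (ENat.lt_add_one_iff (ENat.natCast_ne_top n)).2 (by exact_mod_cast hmn)⟩

theorem setOf_entryTime_le {T : ℝ → ℝ} {B : Set ℝ} {s : ℝ} (hs : 0 ≤ s) :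
    {x | ∃ n : ℕ, entryTime T B x = n ∧ (n : ℝ) ≤ s}
      = {x | ∃ m, 1 ≤ m ∧ m ≤ ⌊s⌋₊ ∧ T^[m] x ∈ B} := by
  ext x
  rw [mem_ofPred_eq, mem_ofPred_eq, ← entryTime_le_iff]
  constructor
  · rintro ⟨n, hn, hns⟩
    rw [hn]
    exact_mod_cast Nat.le_floor hns
  · intro h
    obtain ⟨n, hn⟩ := ENat.ne_top_iff_exists.1 (ne_top_of_le_ne_top (ENat.natCast_ne_top _) h)
    rw [← hn, Nat.cast_le] at h
    exact ⟨n, hn.symm, (Nat.cast_le.2 h).trans (Nat.floor_le hs)⟩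

section Translates

variable {G : Type*} [AddCommGroup G]

theorem disjoint_preimage_add_nsmul {A B : Set G} {θ : G} {m m' : ℕ}
    (h : Disjoint A ((· + ((m' : ℤ) - m) • θ) ⁻¹' B)) :
    Disjoint ((· + m • θ) ⁻¹' A) ((· + m' • θ) ⁻¹' B) := by
  have hB : (· + m' • θ) ⁻¹' B = (· + m • θ) ⁻¹' ((· + ((m' : ℤ) - m) • θ) ⁻¹' B) := by
    ext x
    simp only [mem_preimage, sub_smul, natCast_zsmul, add_add_sub_cancel]
  rw [hB]
  exact h.preimage _

theorem biUnion_preimage_add_nsmul_neg (θ : G) (A : Set G) (s : Finset ℕ) :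
    ⋃ m ∈ s, (· + m • θ) ⁻¹' (-A) = -⋃ m ∈ s, (· + m • (-θ)) ⁻¹' A := by
  ext x
  simp only [mem_preimage, mem_iUnion, Set.mem_neg, neg_add, smul_neg]

theorem biUnion_preimage_add_nsmul_union_eq {I J : Set G} {θ : G} {q N : ℕ}
    (hJI : ∀ x ∈ J, x + q • θ ∈ I) :
    ⋃ m ∈ Finset.Icc 1 N, (· + m • θ) ⁻¹' (I ∪ J)
      = (⋃ m ∈ Finset.Icc 1 N, (· + m • θ) ⁻¹' I)
        ∪ ⋃ m ∈ Finset.Ioc (N - q) N, (· + m • θ) ⁻¹' J := by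
  ext x
  simp only [mem_iUnion, mem_union, mem_preimage, Finset.mem_Icc, Finset.mem_Ioc, exists_prop]
  constructor
  · rintro ⟨m, hm, hxI | hxJ⟩
    · exact Or.inl ⟨m, hm, hxI⟩
    · by_cases hmq : N - q < m
      · exact Or.inr ⟨m, ⟨hmq, hm.2⟩, hxJ⟩
      · refine Or.inl ⟨m + q, by omega, ?_⟩
        simpa [add_nsmul, add_assoc] using hJI _ hxJ
  · rintro (⟨m, hm, hxI⟩ | ⟨m, hm, hxJ⟩)
    · exact ⟨m, hm, Or.inl hxI⟩
    · exact ⟨m, by omega, Or.inr hxJ⟩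

variable [MeasurableSpace G] [MeasurableAdd G] (μ : Measure G) [μ.IsAddRightInvariant]

theorem measure_biUnion_preimage_add_nsmul {A : Set G} (hA : MeasurableSet A) {θ : G}
    {s : Finset ℕ} (h : (s : Set ℕ).PairwiseDisjoint fun m => (· + m • θ) ⁻¹' A) :
    μ (⋃ m ∈ s, (· + m • θ) ⁻¹' A) = s.card * μ A := by
  rw [measure_biUnion_finset h fun m _ => measurable_add_const _ hA]
  simp [measure_preimage_add_right]

theorem measure_biUnion_preimage_add_nsmul_union {I J : Set G} (hI : MeasurableSet I)
    (hJ : MeasurableSet J) {θ : G} {q N : ℕ} (hJI : ∀ x ∈ J, x + q • θ ∈ I)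
    (hII : ∀ d : ℤ, d ≠ 0 → |d| < N → Disjoint I ((· + d • θ) ⁻¹' I))
    (hJJ : ∀ d : ℤ, d ≠ 0 → |d| < min N q → Disjoint J ((· + d • θ) ⁻¹' J))
    (hIJ : ∀ d : ℤ, -q < d → d < N → Disjoint I ((· + d • θ) ⁻¹' J)) :
    μ (⋃ m ∈ Finset.Icc 1 N, (· + m • θ) ⁻¹' (I ∪ J)) = N * μ I + min N q * μ J := by
  have hdisj : Disjoint (⋃ m ∈ Finset.Icc 1 N, (· + m • θ) ⁻¹' I)
      (⋃ m ∈ Finset.Ioc (N - q) N, (· + m • θ) ⁻¹' J) := by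
    simp only [disjoint_iUnion_left, disjoint_iUnion_right, Finset.mem_Icc, Finset.mem_Ioc]
    exact fun m hm m' hm' => disjoint_preimage_add_nsmul (hIJ _ (by omega) (by omega))
  have hpairI : ((Finset.Icc 1 N : Finset ℕ) : Set ℕ).PairwiseDisjoint
      fun m => (· + m • θ) ⁻¹' I := by
    intro m hm m' hm' hne
    simp only [Finset.coe_Icc, mem_Icc] at hm hm'
    exact disjoint_preimage_add_nsmul (hII _ (by omega) (abs_lt.2 ⟨by omega, by omega⟩))
  have hpairJ : ((Finset.Ioc (N - q) N : Finset ℕ) : Set ℕ).PairwiseDisjoint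
      fun m => (· + m • θ) ⁻¹' J := by
    intro m hm m' hm' hne
    simp only [Finset.coe_Ioc, mem_Ioc] at hm hm'
    exact disjoint_preimage_add_nsmul (hJJ _ (by omega) (abs_lt.2 ⟨by omega, by omega⟩))
  rw [biUnion_preimage_add_nsmul_union_eq hJI, measure_union hdisj
      (Finset.measurableSet_biUnion _ fun m _ => measurable_add_const _ hJ),
    measure_biUnion_preimage_add_nsmul μ hI hpairI, measure_biUnion_preimage_add_nsmul μ hJ hpairJ,
    Nat.card_Icc, Nat.card_Ioc, Nat.add_sub_cancel, Nat.sub_sub_eq_min]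

end Translates

/-- The arc `(-f, e)` of `ℝ/ℤ` punctured at `0`, i.e. the image of `(-f, 0) ∪ (0, e)`. -/
def puncturedArc (e f : ℝ) : Set UnitAddCircle :=
  Metric.ball ((e / 2 : ℝ) : UnitAddCircle) (e / 2)
    ∪ Metric.ball ((-(f / 2) : ℝ) : UnitAddCircle) (f / 2)

theorem neg_puncturedArc (e f : ℝ) : -puncturedArc e f = puncturedArc f e := by
  rw [puncturedArc, puncturedArc, Set.union_neg, neg_ball, neg_ball, ← AddCircle.coe_neg,
    ← AddCircle.coe_neg, neg_neg, union_comm]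

theorem coe_image_Ioo_union_Ioo (e f : ℝ) :
    ((↑) : ℝ → UnitAddCircle) '' (Ioo 0 e ∪ Ioo (1 - f) 1) = puncturedArc e f := by
  rw [image_union, UnitAddCircle.coe_image_Ioo, UnitAddCircle.coe_image_Ioo, puncturedArc,
    show (1 - f + 1) / 2 = -(f / 2) + 1 by ring, AddCircle.coe_add, AddCircle.coe_period, add_zero]
  ring_nf

theorem coe_image_Bset (α : ℝ) (k : ℕ) :
    ((↑) : ℝ → UnitAddCircle) '' Bset α k
      = if Even k then puncturedArc (cfEta α k) (cfEta α (k + 1))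
        else -puncturedArc (cfEta α k) (cfEta α (k + 1)) := by
  rw [Bset, neg_puncturedArc]
  split_ifs <;> exact coe_image_Ioo_union_Ioo _ _

theorem isOpen_Bset (α : ℝ) (k : ℕ) : IsOpen (Bset α k) := by
  rw [Bset]
  split_ifs <;> exact isOpen_Ioo.union isOpen_Ioo

theorem Bset_subset_Ico {α : ℝ} (hirr : Irrational α) (hα : α ∈ Ioo 0 1) (k : ℕ) :
    Bset α k ⊆ Ico 0 1 := by
  have := cfEta_add_cfEta_succ_le_one hirr hα k
  have := cfEta_pos hirr hα k
  have := cfEta_pos hirr hα (k + 1)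
  rw [Bset]
  split_ifs <;> exact union_subset (fun x hx => ⟨hx.1.le, by linarith [hx.2]⟩)
    (fun x hx => ⟨by linarith [hx.1], hx.2⟩)

theorem disjoint_ball_preimage_add_ball {a b c : UnitAddCircle} {r r' : ℝ}
    (h : r + r' ≤ ‖a - b + c‖) : Disjoint (Metric.ball a r) ((· + c) ⁻¹' Metric.ball b r') := by
  rw [Metric.preimage_add_right_ball]
  exact Metric.ball_disjoint_ball (by rwa [dist_eq_norm, sub_sub_eq_add_sub, add_sub_right_comm])

theorem add_coe_mem_ball_of_mem_ball {e f : ℝ} (hfe : f ≤ e) {x : UnitAddCircle}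
    (hx : x ∈ Metric.ball ((-(f / 2) : ℝ) : UnitAddCircle) (f / 2)) :
    x + e ∈ Metric.ball ((e / 2 : ℝ) : UnitAddCircle) (e / 2) := by
  rw [Metric.mem_ball, dist_eq_norm] at hx ⊢
  have hshift : (((e - f) / 2 : ℝ) : UnitAddCircle)
      = (e : UnitAddCircle) - ((e / 2 : ℝ) : UnitAddCircle) + ((-(f / 2) : ℝ) : UnitAddCircle) := by
    rw [← AddCircle.coe_sub, ← AddCircle.coe_add]
    ring_nf
  calc ‖x + (e : UnitAddCircle) - ((e / 2 : ℝ) : UnitAddCircle)‖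
      ≤ ‖x - ((-(f / 2) : ℝ) : UnitAddCircle)‖ + ‖(((e - f) / 2 : ℝ) : UnitAddCircle)‖ := by
        refine le_of_eq_of_le ?_ (norm_add_le _ _)
        rw [hshift]
        abel_nf
    _ < f / 2 + (e - f) / 2 := add_lt_add_of_lt_of_le hx ((UnitAddCircle.norm_coe_le_abs _).trans
        (abs_of_nonneg (show (0 : ℝ) ≤ (e - f) / 2 by linarith)).le)
    _ = e / 2 := by ring

theorem add_div_two_le_norm_coe_add_zsmul {θ : UnitAddCircle} {e f : ℝ} {q N : ℕ} (hf : 0 ≤ f)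
    (hfe : f ≤ e) (hef : e + f ≤ 1) (hqN : q < N → 2 * e + f ≤ 1) (hqθ : q • θ = e)
    (hθ : ∀ d : ℤ, d ≠ 0 → |d| < max N q → |d| ≠ q → e + f ≤ ‖d • θ‖)
    {d : ℤ} (hdq : -q < d) (hdN : d < N) :
    (e + f) / 2 ≤ ‖(((e + f) / 2 : ℝ) : UnitAddCircle) + d • θ‖ := by
  rcases eq_or_ne d 0 with rfl | hd
  · rw [zero_smul, add_zero]
    exact UnitAddCircle.le_norm_coe_of_mem_Icc ⟨le_rfl, by linarith⟩
  rcases eq_or_ne |d| q with hdq' | hdq'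
  · obtain rfl : d = q := (abs_eq (Nat.cast_nonneg q)).1 hdq' |>.resolve_right (by omega)
    rw [natCast_zsmul, hqθ, ← AddCircle.coe_add]
    exact UnitAddCircle.le_norm_coe_of_mem_Icc ⟨by linarith, by linarith [hqN (by omega)]⟩
  · have h₁ := hθ d hd (abs_lt.2 ⟨by omega, by omega⟩) hdq'
    have h₂ := norm_sub_le ((((e + f) / 2 : ℝ) : UnitAddCircle) + d • θ)
      (((e + f) / 2 : ℝ) : UnitAddCircle)
    have h₃ := UnitAddCircle.norm_coe_le_abs ((e + f) / 2)
    rw [add_sub_cancel_left] at h₂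
    rw [abs_of_nonneg (by linarith)] at h₃
    linarith

theorem volume_biUnion_preimage_add_nsmul_puncturedArc {θ : UnitAddCircle} {e f : ℝ} {q N : ℕ}
    (hf : 0 ≤ f) (hfe : f ≤ e) (hef : e + f ≤ 1) (hqN : q < N → 2 * e + f ≤ 1)
    (hqθ : q • θ = e) (hθ : ∀ d : ℤ, d ≠ 0 → |d| < max N q → |d| ≠ q → e + f ≤ ‖d • θ‖) :
    volume (⋃ m ∈ Finset.Icc 1 N, (· + m • θ) ⁻¹' puncturedArc e f)
      = ENNReal.ofReal (N * e + (min N q : ℕ) * f) := by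
  have he : 0 ≤ e := hf.trans hfe
  rw [puncturedArc, measure_biUnion_preimage_add_nsmul_union volume
    Metric.isOpen_ball.measurableSet Metric.isOpen_ball.measurableSet (q := q),
    UnitAddCircle.volume_ball _ (by linarith), UnitAddCircle.volume_ball _ (by linarith),
    mul_div_cancel₀ e two_ne_zero, mul_div_cancel₀ f two_ne_zero,
    ENNReal.ofReal_add (by positivity) (by positivity), ENNReal.ofReal_mul (Nat.cast_nonneg _),
    ENNReal.ofReal_mul (Nat.cast_nonneg _), ENNReal.ofReal_natCast, ENNReal.ofReal_natCast]
  · exact fun x hx => hqθ ▸ add_coe_mem_ball_of_mem_ball hfe hx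
  · intro d hd hdN
    refine disjoint_ball_preimage_add_ball ?_
    rw [sub_self, zero_add, add_halves]
    rcases eq_or_ne |d| q with hdq | hdq
    · have := hqN (by omega)
      rcases (abs_eq (Nat.cast_nonneg q)).1 hdq with rfl | rfl
      all_goals
        simp only [neg_zsmul, natCast_zsmul, hqθ, norm_neg]
        exact UnitAddCircle.le_norm_coe_of_mem_Icc ⟨le_rfl, by linarith⟩
    · linarith [hθ d hd (by omega) hdq]
  · intro d hd hdN
    refine disjoint_ball_preimage_add_ball ?_
    rw [sub_self, zero_add, add_halves]
    linarith [hθ d hd (by omega) (by omega)]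
  · intro d hdq hdN
    refine disjoint_ball_preimage_add_ball ?_
    rw [← AddCircle.coe_sub, sub_neg_eq_add, ← add_div]
    exact add_div_two_le_norm_coe_add_zsmul hf hfe hef hqN hqθ hθ hdq hdN

theorem μrot_setOf_rot_iterate_mem_Bset {α : ℝ} (hirr : Irrational α) (hα : α ∈ Ioo 0 1)
    (k : ℕ) {N : ℕ} (hN : (N : ℤ) ≤ cfQ α (k + 1)) :
    μrot {x | ∃ m, 1 ≤ m ∧ m ≤ N ∧ (rot α)^[m] x ∈ Bset α k}
      = ENNReal.ofReal (N * cfEta α k + min (N : ℝ) (cfQ α k) * cfEta α (k + 1)) := by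
  obtain ⟨q, hq⟩ : ∃ q : ℕ, cfQ α k = q :=
    Int.eq_ofNat_of_zero_le (by linarith [one_le_cfQ hirr hα k])
  have hqQ := cfQ_le_cfQ_succ hirr hα k
  have hef := cfEta_add_cfEta_succ_le_one hirr hα k
  have hf := (cfEta_pos hirr hα (k + 1)).le
  have hfe := (cfEta_succ_lt hirr hα k).le
  have hqN : q < N → 2 * cfEta α k + cfEta α (k + 1) ≤ 1 := fun h =>
    two_mul_cfEta_add_cfEta_succ_le_one hirr hα (by omega)
  have hθ : ∀ d : ℤ, d ≠ 0 → |d| < max N q → |d| ≠ q →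
      cfEta α k + cfEta α (k + 1) ≤ ‖d • (α : UnitAddCircle)‖ := fun d hd hdN hdq =>
    cfEta_add_le_norm_zsmul hirr hα k hd (by omega) (hq ▸ hdq)
  have hqθ := cfQ_zsmul_coe hirr hα k
  rw [hq, natCast_zsmul] at hqθ
  rw [μrot_setOf_rot_iterate_mem (Bset_subset_Ico hirr hα k) (isOpen_Bset α k), coe_image_Bset,
    hq, Int.cast_natCast, ← Nat.cast_min]
  split_ifs with hk
  · rw [hk.neg_one_pow, one_mul] at hqθ
    exact volume_biUnion_preimage_add_nsmul_puncturedArc hf hfe hef hqN hqθ hθ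
  · -- For odd `k`, `B_k` is the mirror image of the even configuration: rotate by `-α` instead.
    rw [(Nat.not_even_iff_odd.1 hk).neg_one_pow, neg_one_mul] at hqθ
    rw [biUnion_preimage_add_nsmul_neg, Measure.measure_neg]
    refine volume_biUnion_preimage_add_nsmul_puncturedArc hf hfe hef hqN
      (by rw [smul_neg, hqθ, AddCircle.coe_neg, neg_neg]) fun d hd hdN hdq => ?_
    rw [smul_neg, norm_neg]
    exact hθ d hd hdN hdq

theorem μrot_setOf_entryTime_le_toReal {α : ℝ} (hirr : Irrational α) (hα : α ∈ Ioo 0 1) (k : ℕ)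
    {s : ℝ} (hs : 0 ≤ s) (hsQ : s < cfQ α (k + 1)) :
    (μrot {x | ∃ n : ℕ, entryTime (rot α) (Bset α k) x = n ∧ (n : ℝ) ≤ s}).toReal
      = ⌊s⌋ * cfEta α k + min (⌊s⌋ : ℝ) (cfQ α k) * cfEta α (k + 1) := by
  have hN : ((⌊s⌋₊ : ℕ) : ℤ) ≤ cfQ α (k + 1) := by
    have : ((⌊s⌋₊ : ℤ) : ℝ) < cfQ α (k + 1) := by
      rw [Int.cast_natCast]
      exact (Nat.floor_le hs).trans_lt hsQ
    exact_mod_cast this.le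
  have hq : (0 : ℝ) ≤ cfQ α k := by exact_mod_cast (zero_lt_one.trans_le (one_le_cfQ hirr hα k)).le
  rw [setOf_entryTime_le hs, μrot_setOf_rot_iterate_mem_Bset hirr hα k hN,
    ENNReal.toReal_ofReal (add_nonneg (mul_nonneg (Nat.cast_nonneg _) (cfEta_pos hirr hα k).le)
      (mul_nonneg (le_min (Nat.cast_nonneg _) hq) (cfEta_pos hirr hα (k + 1)).le)),
    natCast_floor_eq_intCast_floor hs]

theorem μrot_setOf_entryTime_le_eq_one {α : ℝ} (hirr : Irrational α) (hα : α ∈ Ioo 0 1) (k : ℕ)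
    {s : ℝ} (hs : (cfQ α (k + 1) : ℝ) ≤ s) :
    μrot {x | ∃ n : ℕ, entryTime (rot α) (Bset α k) x = n ∧ (n : ℝ) ≤ s} = 1 := by
  obtain ⟨Q, hQ⟩ : ∃ Q : ℕ, cfQ α (k + 1) = Q :=
    Int.eq_ofNat_of_zero_le (by linarith [one_le_cfQ hirr hα (k + 1)])
  rw [hQ, Int.cast_natCast] at hs
  have hs0 : 0 ≤ s := (Nat.cast_nonneg Q).trans hs
  apply le_antisymm
  · calc _ ≤ μrot univ := measure_mono (subset_univ _)
      _ = 1 := by simp [μrot]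
  calc 1 = ENNReal.ofReal (Q * cfEta α k + min (Q : ℝ) (cfQ α k) * cfEta α (k + 1)) := by
        rw [min_eq_right (by exact_mod_cast hQ ▸ cfQ_le_cfQ_succ hirr hα k), ← Int.cast_natCast,
          ← hQ, cfQ_succ_mul_cfEta_add hirr hα k, ENNReal.ofReal_one]
    _ = μrot {x | ∃ m, 1 ≤ m ∧ m ≤ Q ∧ (rot α)^[m] x ∈ Bset α k} :=
        (μrot_setOf_rot_iterate_mem_Bset hirr hα k hQ.ge).symm
    _ ≤ _ := by
        rw [setOf_entryTime_le hs0]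
        exact measure_mono fun x ⟨m, h1, h2, h3⟩ => ⟨m, h1, h2.trans (Nat.le_floor hs), h3⟩

theorem stmt8 (α : ℝ) (hirr : Irrational α) (hα : α ∈ Set.Ioo (0 : ℝ) 1) (k : ℕ) (s : ℝ) :
    ((cfQ α (k + 1) : ℝ) ≤ s →
      (μrot {x | ∃ n : ℕ, entryTime (rot α) (Bset α k) x = (n : ℕ∞) ∧ (n : ℝ) ≤ s}).toReal
        = 1) ∧
    ((cfQ α k : ℝ) ≤ s → s < (cfQ α (k + 1) : ℝ) →
      (μrot {x | ∃ n : ℕ, entryTime (rot α) (Bset α k) x = (n : ℕ∞) ∧ (n : ℝ) ≤ s}).toReal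
        = (cfQ α k : ℝ) * cfEta α (k + 1) + cfEta α k * (⌊s⌋ : ℝ)) ∧
    (0 ≤ s → s < (cfQ α k : ℝ) →
      (μrot {x | ∃ n : ℕ, entryTime (rot α) (Bset α k) x = (n : ℕ∞) ∧ (n : ℝ) ≤ s}).toReal
        = (cfEta α k + cfEta α (k + 1)) * (⌊s⌋ : ℝ)) := by
  have hq : (1 : ℝ) ≤ cfQ α k := by exact_mod_cast one_le_cfQ hirr hα k
  have hqQ : (cfQ α k : ℝ) ≤ cfQ α (k + 1) := by exact_mod_cast cfQ_le_cfQ_succ hirr hα k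
  refine ⟨fun hs => ?_, fun hqs hsQ => ?_, fun hs hsq => ?_⟩
  · rw [μrot_setOf_entryTime_le_eq_one hirr hα k hs, ENNReal.toReal_one]
  · rw [μrot_setOf_entryTime_le_toReal hirr hα k (by linarith) hsQ,
      min_eq_right (by exact_mod_cast Int.le_floor.2 hqs)]
    ring
  · rw [μrot_setOf_entryTime_le_toReal hirr hα k hs (by linarith),
      min_eq_left (by exact_mod_cast (Int.floor_lt.2 hsq).le)]
    ring
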